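/- (Empirical approximation bound.) Let 𝒴, 𝒵 = {0,1} be finite and fix a scalar happiness function setting. Suppose p̂(ŷ,y,z) and ξ̂(ỹ,ŷ,z) are approximations of the true quantities p(ŷ,y,z) and ξ(ỹ,ŷ,z) with |p̂ − p| ≤ δ and |ξ̂ − ξ| ≤ δ entrywise, for some δ ≥ 0. Let L(ε) denote the minimum of the true loss 1 − Σ_{y,ŷ,z} p(ŷ,y,z) q(y|ŷ,z) over stochastic kernels q satisfying the true fairness constraint |Σ_{ỹ,ŷ} ξ(ỹ,ŷ,0) q(ỹ|ŷ,0) − Σ_{ỹ,ŷ} ξ(ỹ,ŷ,1) q(ỹ|ŷ,1)| ≤ ε, and let L̂(ε) denote the analogous minimum with p̂, ξ̂ in place of p, ξ. If there exists a kernel q achieving L̂(ε − 2δ|𝒴|²) (i.e., the empirical problem with tightened constraint is feasible), then any such optimal kernel q is feasible for the true problem at level ε and satisfies true loss at most L̂(ε − 2δ|𝒴|²) + δ|𝒴|²·|𝒵|; hence L(ε) ≤ L̂(ε − 2δ|𝒴|²) + δ|𝒴|²|𝒵|. -/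
import Mathlib


open Finset

/-- A post-processing kernel `q(yt|ŷ,z)` is stochastic. -/
def Stochastic {𝒴 : Type*} [Fintype 𝒴] (q : 𝒴 → 𝒴 → Bool → ℝ) : Prop :=
  (∀ yt yh z, 0 ≤ q yt yh z) ∧ (∀ yh z, ∑ yt, q yt yh z = 1)

/-- The fairness gap `|Σ ξ(·,·,0) q(·|·,0) − Σ ξ(·,·,1) q(·|·,1)|` for scalar coefficients. -/
noncomputable def fairGap {𝒴 : Type*} [Fintype 𝒴] (ξ : 𝒴 → 𝒴 → Bool → ℝ)
    (q : 𝒴 → 𝒴 → Bool → ℝ) : ℝ :=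
  |(∑ yt, ∑ yh, ξ yt yh false * q yt yh false) - (∑ yt, ∑ yh, ξ yt yh true * q yt yh true)|

/-- The misclassification loss `1 − Σ_{y,ŷ,z} p(ŷ,y,z) q(y|ŷ,z)`. -/
noncomputable def klLoss {𝒴 : Type*} [Fintype 𝒴] (p : 𝒴 → 𝒴 → Bool → ℝ)
    (q : 𝒴 → 𝒴 → Bool → ℝ) : ℝ :=
  1 - ∑ y, ∑ yh, ∑ z, p yh y z * q y yh z


lemma key_bound {𝒴 : Type*} [Fintype 𝒴] (a b : 𝒴 → 𝒴 → ℝ) (q : 𝒴 → 𝒴 → ℝ) (δ : ℝ)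
    (hab : ∀ i j, |a i j - b i j| ≤ δ)
    (hq0 : ∀ i j, 0 ≤ q i j) (hq1 : ∀ j, ∑ i, q i j = 1) :
    |(∑ i, ∑ j, a i j * q i j) - ∑ i, ∑ j, b i j * q i j| ≤ δ * (Fintype.card 𝒴 : ℝ) := by
  have h1 : (∑ i, ∑ j, a i j * q i j) - ∑ i, ∑ j, b i j * q i j
      = ∑ i, ∑ j, (a i j - b i j) * q i j := by
    rw [← Finset.sum_sub_distrib]
    refine Finset.sum_congr rfl fun i _ => ?_
    rw [← Finset.sum_sub_distrib]
    exact Finset.sum_congr rfl fun j _ => by ring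
  rw [h1]
  calc |∑ i, ∑ j, (a i j - b i j) * q i j| ≤ ∑ i, ∑ j, |(a i j - b i j) * q i j| := by
        refine (Finset.abs_sum_le_sum_abs _ _).trans ?_
        exact Finset.sum_le_sum fun i _ => Finset.abs_sum_le_sum_abs _ _
    _ ≤ ∑ i, ∑ j, δ * q i j := by
        refine Finset.sum_le_sum fun i _ => Finset.sum_le_sum fun j _ => ?_
        rw [abs_mul, abs_of_nonneg (hq0 i j)]
        exact mul_le_mul_of_nonneg_right (hab i j) (hq0 i j)
    _ = δ * (Fintype.card 𝒴 : ℝ) := by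
        rw [Finset.sum_comm]
        simp [← Finset.mul_sum, hq1, Finset.card_univ, mul_comm]

/-- Empirical approximation bound: if `p̂, ξ̂` are entrywise `δ`-accurate approximations of
`p, ξ`, and `q` is an optimal stochastic kernel for the empirical problem with the tightened
constraint `ε − 2δ|𝒴|²`, then `q` is feasible for the true problem at level `ε`, its true loss
is at most its empirical loss plus `δ|𝒴|²·2`, and hence `L(ε) ≤ L̂(ε − 2δ|𝒴|²) + δ|𝒴|²·2`. -/
theorem empirical_approximation_bound
    {𝒴 : Type*} [Fintype 𝒴]
    (p phat ξ ξhat : 𝒴 → 𝒴 → Bool → ℝ)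
    (δ ε : ℝ) (hδ : 0 ≤ δ)
    (hp : ∀ yh y z, |phat yh y z - p yh y z| ≤ δ)
    (hξ : ∀ yt yh z, |ξhat yt yh z - ξ yt yh z| ≤ δ)
    (q : 𝒴 → 𝒴 → Bool → ℝ) (hq : Stochastic q)
    (hfeas : fairGap ξhat q ≤ ε - 2 * δ * (Fintype.card 𝒴 : ℝ) ^ 2)
    (hopt : ∀ q' : 𝒴 → 𝒴 → Bool → ℝ, Stochastic q' →
      fairGap ξhat q' ≤ ε - 2 * δ * (Fintype.card 𝒴 : ℝ) ^ 2 → klLoss phat q ≤ klLoss phat q') :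
    fairGap ξ q ≤ ε ∧
    klLoss p q ≤ klLoss phat q + δ * (Fintype.card 𝒴 : ℝ) ^ 2 * 2 ∧
    sInf {l : ℝ | ∃ q' : 𝒴 → 𝒴 → Bool → ℝ,
        Stochastic q' ∧ fairGap ξ q' ≤ ε ∧ l = klLoss p q'}
      ≤ klLoss phat q + δ * (Fintype.card 𝒴 : ℝ) ^ 2 * 2 := by

  obtain ⟨hq0, hq1⟩ := hq
  set n : ℝ := (Fintype.card 𝒴 : ℝ) with hn_def
  have hn0 : 0 ≤ n := Nat.cast_nonneg _
  have hn : n ≤ n ^ 2 := by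
    have : (Fintype.card 𝒴 : ℕ) ≤ (Fintype.card 𝒴) ^ 2 := Nat.le_self_pow two_ne_zero _
    rw [hn_def]
    calc ((Fintype.card 𝒴 : ℕ) : ℝ) ≤ ((Fintype.card 𝒴 ^ 2 : ℕ) : ℝ) := by exact_mod_cast this
      _ = ((Fintype.card 𝒴 : ℕ) : ℝ) ^ 2 := by push_cast; ring
  have hdn : δ * n ≤ δ * n ^ 2 := mul_le_mul_of_nonneg_left hn hδ
  -- per-group fairness approximation
  have hz : ∀ z, |(∑ yt, ∑ yh, ξhat yt yh z * q yt yh z)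
      - ∑ yt, ∑ yh, ξ yt yh z * q yt yh z| ≤ δ * n := fun z =>
    key_bound (fun i j => ξhat i j z) (fun i j => ξ i j z) (fun i j => q i j z) δ
      (fun i j => hξ i j z) (fun i j => hq0 i j z) (fun j => hq1 j z)
  have hfair : fairGap ξ q ≤ ε := by
    have h0 := hz false
    have h1 := hz true
    unfold fairGap at hfeas ⊢
    have hub : |(∑ yt, ∑ yh, ξ yt yh false * q yt yh false)
        - ∑ yt, ∑ yh, ξ yt yh true * q yt yh true| ≤
        |(∑ yt, ∑ yh, ξhat yt yh false * q yt yh false)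
        - ∑ yt, ∑ yh, ξhat yt yh true * q yt yh true| + (δ * n + δ * n) := by
      set A0 := ∑ yt, ∑ yh, ξ yt yh false * q yt yh false
      set A1 := ∑ yt, ∑ yh, ξ yt yh true * q yt yh true
      set B0 := ∑ yt, ∑ yh, ξhat yt yh false * q yt yh false
      set B1 := ∑ yt, ∑ yh, ξhat yt yh true * q yt yh true
      have e : A0 - A1 = (B0 - B1) + ((A0 - B0) + (B1 - A1)) := by ring
      rw [e]
      refine (abs_add_le _ _).trans ?_
      have : |(A0 - B0) + (B1 - A1)| ≤ δ * n + δ * n := by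
        refine (abs_add_le _ _).trans (add_le_add ?_ ?_)
        · rw [abs_sub_comm]; exact h0
        · exact h1
      linarith
    nlinarith [hub, hfeas]
  -- loss approximation
  have hzl : ∀ z : Bool, |(∑ y, ∑ yh, p yh y z * q y yh z)
      - ∑ y, ∑ yh, phat yh y z * q y yh z| ≤ δ * n := fun z => by
    have := key_bound (fun i j => p j i z) (fun i j => phat j i z) (fun i j => q i j z) δ
      (fun i j => by rw [abs_sub_comm]; exact hp j i z)
      (fun i j => hq0 i j z) (fun j => hq1 j z)
    exact this
  have hsplit : ∀ r : 𝒴 → 𝒴 → Bool → ℝ,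
      (∑ y, ∑ yh, ∑ z, r yh y z * q y yh z)
      = (∑ y, ∑ yh, r yh y false * q y yh false) + (∑ y, ∑ yh, r yh y true * q y yh true) := by
    intro r
    rw [← Finset.sum_add_distrib]
    refine Finset.sum_congr rfl fun y _ => ?_
    rw [← Finset.sum_add_distrib]
    refine Finset.sum_congr rfl fun yh _ => ?_
    rw [Fintype.sum_bool]
    ring
  have hloss : klLoss p q ≤ klLoss phat q + δ * n ^ 2 * 2 := by
    have h0 := abs_le.1 (hzl false)
    have h1 := abs_le.1 (hzl true)
    unfold klLoss
    rw [hsplit p, hsplit phat]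
    linarith [h0.1, h1.1, hdn]
  refine ⟨hfair, hloss, ?_⟩
  -- sInf bound
  have hmem : klLoss p q ∈ {l : ℝ | ∃ q' : 𝒴 → 𝒴 → Bool → ℝ,
      Stochastic q' ∧ fairGap ξ q' ≤ ε ∧ l = klLoss p q'} := ⟨q, ⟨hq0, hq1⟩, hfair, rfl⟩
  have hbdd : BddBelow {l : ℝ | ∃ q' : 𝒴 → 𝒴 → Bool → ℝ,
      Stochastic q' ∧ fairGap ξ q' ≤ ε ∧ l = klLoss p q'} := by
    refine ⟨1 - ∑ y, ∑ yh, ∑ z, |p yh y z|, ?_⟩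
    rintro l ⟨q', ⟨hq'0, hq'1⟩, -, rfl⟩
    have hle1 : ∀ y yh z, q' y yh z ≤ 1 := fun y yh z => by
      calc q' y yh z ≤ ∑ yt, q' yt yh z :=
            Finset.single_le_sum (fun i _ => hq'0 i yh z) (Finset.mem_univ y)
        _ = 1 := hq'1 yh z
    unfold klLoss
    have : (∑ y, ∑ yh, ∑ z, p yh y z * q' y yh z) ≤ ∑ y, ∑ yh, ∑ z, |p yh y z| := by
      refine Finset.sum_le_sum fun y _ => Finset.sum_le_sum fun yh _ =>
        Finset.sum_le_sum fun z _ => ?_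
      calc p yh y z * q' y yh z ≤ |p yh y z * q' y yh z| := le_abs_self _
        _ = |p yh y z| * q' y yh z := by rw [abs_mul, abs_of_nonneg (hq'0 y yh z)]
        _ ≤ |p yh y z| * 1 := mul_le_mul_of_nonneg_left (hle1 y yh z) (abs_nonneg _)
        _ = |p yh y z| := mul_one _
    linarith
  exact (csInf_le hbdd hmem).trans hloss
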